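/- arXiv:2009.00511 — 11 statements merged into one kernel-verified Lean document; each statement's English description precedes it below -/
import Mathlib

section
/- In every quasi-pseudometric space (X,d), if two nets (x_a)_{a∈A} and (x_β)_{β∈B} are right d-cofinal, then every conet of (x_a)_{a∈A} is a conet of (x_β)_{β∈B} and vice versa (they have the same conets). -/
universe u v w

/-- A quasi-pseudometric on `X`: nonnegative, zero on the diagonal,
and satisfying the triangle inequality. -/
def IsQPMetric {X : Type u} (d : X → X → ℝ) : Prop :=
  (∀ a b, 0 ≤ d a b) ∧ (∀ a, d a a = 0) ∧ ∀ a b c, d a c ≤ d a b + d b c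

/-- A quasi-metric: additionally `d x y = 0` implies `x = y`. -/
def IsQMetric {X : Type u} (d : X → X → ℝ) : Prop :=
  IsQPMetric d ∧ ∀ a b, d a b = 0 → a = b

/-- A net in `X`: a function from a nonempty directed preordered index type to `X`. -/
structure Net (X : Type u) : Type (max u (v + 1)) where
  ι : Type v
  le : ι → ι → Prop
  le_refl : ∀ a, le a a
  le_trans : ∀ a b c, le a b → le b c → le a c
  nonempty : Nonempty ι
  directed : ∀ a b, ∃ c, le a c ∧ le b c
  toFun : ι → X

namespace Net

variable {X : Type u}

/-- Right `d_S`-Cauchy net (Stoltenberg): for every `ε > 0` there is `a₀` with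
`d(x_β, x_α) < ε` whenever `α ≥ a₀`, `β ≥ a₀` and `α ≱ β`. -/
def RightCauchy (d : X → X → ℝ) (N : Net.{u, v} X) : Prop :=
  ∀ ε : ℝ, 0 < ε → ∃ a₀ : N.ι, ∀ α β : N.ι,
    N.le a₀ α → N.le a₀ β → ¬ N.le β α → d (N.toFun β) (N.toFun α) < ε

/-- Left `d_S`-Cauchy net. -/
def LeftCauchy (d : X → X → ℝ) (N : Net.{u, v} X) : Prop :=
  ∀ ε : ℝ, 0 < ε → ∃ a₀ : N.ι, ∀ α β : N.ι,
    N.le a₀ α → N.le a₀ β → ¬ N.le β α → d (N.toFun α) (N.toFun β) < ε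

/-- `M` is a conet of `N`. -/
def IsConet (d : X → X → ℝ) (M : Net.{u, v} X) (N : Net.{u, w} X) : Prop :=
  ∀ ε : ℝ, 0 < ε → ∃ (a₀ : N.ι) (b₀ : M.ι), ∀ (a : N.ι) (b : M.ι),
    N.le a₀ a → M.le b₀ b → d (M.toFun b) (N.toFun a) < ε

/-- `N` is right `d`-cofinal to `M`. -/
def RightCofinalTo (d : X → X → ℝ) (N : Net.{u, v} X) (M : Net.{u, w} X) : Prop :=
  ∀ ε : ℝ, 0 < ε → ∃ a₀ : N.ι, ∀ a : N.ι, N.le a₀ a →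
    ∃ b₀ : M.ι, ∀ b : M.ι, M.le b₀ b → d (M.toFun b) (N.toFun a) < ε

/-- `N` and `M` are right `d`-cofinal (each is right `d`-cofinal to the other). -/
def RightCofinal (d : X → X → ℝ) (N : Net.{u, v} X) (M : Net.{u, w} X) : Prop :=
  RightCofinalTo d N M ∧ RightCofinalTo d M N

/-- `N` is left `d`-cofinal to `M`. -/
def LeftCofinalTo (d : X → X → ℝ) (N : Net.{u, v} X) (M : Net.{u, w} X) : Prop :=
  ∀ ε : ℝ, 0 < ε → ∃ a₀ : N.ι, ∀ a : N.ι, N.le a₀ a →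
    ∃ b₀ : M.ι, ∀ b : M.ι, M.le b₀ b → d (N.toFun a) (M.toFun b) < ε

/-- `N` and `M` are left `d`-cofinal. -/
def LeftCofinal (d : X → X → ℝ) (N : Net.{u, v} X) (M : Net.{u, w} X) : Prop :=
  LeftCofinalTo d N M ∧ LeftCofinalTo d M N

/-- Convergence of the net `N` to `x` with respect to `τ_d`. -/
def ConvergesTo (d : X → X → ℝ) (N : Net.{u, v} X) (x : X) : Prop :=
  ∀ ε : ℝ, 0 < ε → ∃ a₀ : N.ι, ∀ a : N.ι, N.le a₀ a → d x (N.toFun a) < ε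

/-- Convergence of the net `N` to `x` with respect to the conjugate topology `τ_{d⁻¹}`. -/
def RevConvergesTo (d : X → X → ℝ) (N : Net.{u, v} X) (x : X) : Prop :=
  ∀ ε : ℝ, 0 < ε → ∃ a₀ : N.ι, ∀ a : N.ι, N.le a₀ a → d (N.toFun a) x < ε

/-- Image of a net under a map. -/
def map {Y : Type w} (N : Net.{u, v} X) (f : X → Y) : Net.{w, v} Y :=
  ⟨N.ι, N.le, N.le_refl, N.le_trans, N.nonempty, N.directed, fun a => f (N.toFun a)⟩

end Net

/-- The constant net at `x`. -/
def constNet {X : Type u} (x : X) : Net.{u, u} X :=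
  ⟨PUnit, fun _ _ => True, fun _ => trivial, fun _ _ _ _ _ => trivial,
    ⟨PUnit.unit⟩, fun a _b => ⟨a, trivial, trivial⟩, fun _ => x⟩

/-- A sequence viewed as a net indexed by `ℕ`. -/
def seqNet {X : Type u} (t : ℕ → X) : Net.{u, 0} X :=
  ⟨ℕ, (· ≤ ·), fun a => le_refl a, fun _ _ _ h h' => le_trans h h', ⟨0⟩,
    fun a b => ⟨max a b, le_max_left a b, le_max_right a b⟩, t⟩

/-- Right `K`-Cauchy sequence. -/
def RightKCauchySeq {X : Type u} (d : X → X → ℝ) (t : ℕ → X) : Prop :=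
  ∀ ε : ℝ, 0 < ε → ∃ k : ℕ, ∀ n m : ℕ, k ≤ m → m ≤ n → d (t n) (t m) < ε

/-- Convergence of a sequence with respect to `τ_d`. -/
def SeqConvergesTo {X : Type u} (d : X → X → ℝ) (t : ℕ → X) (x : X) : Prop :=
  ∀ ε : ℝ, 0 < ε → ∃ k : ℕ, ∀ n : ℕ, k ≤ n → d x (t n) < ε

/-- The defining conditions (i) and (ii) of a `δ`-cut for a pair of families of nets. -/
def IsCutPair {X : Type u} (d : X → X → ℝ) (A B : Set (Net.{u, u} X)) : Prop :=
  (∀ N ∈ A, Net.RightCauchy d N) ∧ (∀ M ∈ B, Net.LeftCauchy d M) ∧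
  (∀ N ∈ A, ∀ M ∈ B, Net.IsConet d M N) ∧
  (∀ N ∈ A, ∀ N' ∈ A, Net.RightCofinal d N N') ∧
  (∀ M ∈ B, ∀ M' ∈ B, Net.LeftCofinal d M M')

/-- A `δ`-cut in `(X, d)`: a pair of families of right/left `d_S`-Cauchy nets
satisfying the conet and cofinality conditions, maximal with respect to inclusion. -/
structure DeltaCut {X : Type u} (d : X → X → ℝ) : Type (u + 1) where
  A : Set (Net.{u, u} X)
  B : Set (Net.{u, u} X)
  isCutPair : IsCutPair d A B
  maximal : ∀ A' B', IsCutPair d A' B' → A ⊆ A' → B ⊆ B' → A' = A ∧ B' = B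

/-- The condition `lim sup d(x_a, x_γ) ≤ r` computed via representatives `N, M`. -/
def ViaLe {X : Type u} (d : X → X → ℝ) (N M : Net.{u, u} X) (r : ℝ) : Prop :=
  ∀ ε : ℝ, 0 < ε → ∃ (a₀ : N.ι) (b₀ : M.ι), ∀ (a : N.ι) (b : M.ι),
    N.le a₀ a → M.le b₀ b → d (N.toFun a) (M.toFun b) < r + ε

/-- The relation `d̂(ξ, ξ') ≤ r`. -/
def hatLe {X : Type u} (d : X → X → ℝ) (ξ ξ' : DeltaCut d) (r : ℝ) : Prop :=
  ξ.A = ξ'.A ∨ ∀ N ∈ ξ.A, ∀ M ∈ ξ'.B, ViaLe d N M r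

/-- The extended quasi-pseudometric `d̂` on the set of `δ`-cuts. -/
noncomputable def hatD {X : Type u} (d : X → X → ℝ) (ξ ξ' : DeltaCut d) : ℝ :=
  sInf {r : ℝ | 0 ≤ r ∧ hatLe d ξ ξ' r}

/-- `ξ` is a cut `φ(x)`: both of its classes contain the constant net at `x`. -/
def IsPhiCut {X : Type u} (d : X → X → ℝ) (x : X) (ξ : DeltaCut d) : Prop :=
  constNet x ∈ ξ.A ∧ constNet x ∈ ξ.B

/-- `δ`-completeness: every `δ`-Cauchy net (a member of the first class of a
`δ`-cut) converges. -/
def DeltaComplete {X : Type u} (d : X → X → ℝ) : Prop :=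
  ∀ ξ : DeltaCut d, ∀ N ∈ ξ.A, ∃ x, Net.ConvergesTo d N x

/-- A quasi-uniformity presented as its family of entourages: a filter of
supersets of the diagonal with the square-root property. -/
def IsQuasiUniformity {X : Type u} (𝒰 : Set (Set (X × X))) : Prop :=
  Set.univ ∈ 𝒰 ∧
  (∀ U ∈ 𝒰, ∀ V : Set (X × X), U ⊆ V → V ∈ 𝒰) ∧
  (∀ U ∈ 𝒰, ∀ V ∈ 𝒰, U ∩ V ∈ 𝒰) ∧
  (∀ U ∈ 𝒰, ∀ x : X, (x, x) ∈ U) ∧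
  (∀ U ∈ 𝒰, ∃ V ∈ 𝒰, ∀ x y z : X, (x, y) ∈ V → (y, z) ∈ V → (x, z) ∈ U)

/-- The quasi-uniformity `𝒰_d` induced by a quasi-pseudometric `d`. -/
def Ud {X : Type u} (d : X → X → ℝ) : Set (Set (X × X)) :=
  {U | ∃ ε : ℝ, 0 < ε ∧ {p : X × X | d p.1 p.2 < ε} ⊆ U}

namespace Net

variable {X : Type u}

/-- Right `𝒰_S`-Cauchy net (Stoltenberg). -/
def URightCauchy (𝒰 : Set (Set (X × X))) (N : Net.{u, v} X) : Prop :=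
  ∀ U ∈ 𝒰, ∃ a₀ : N.ι, ∀ α β : N.ι,
    N.le a₀ α → N.le a₀ β → ¬ N.le β α → (N.toFun β, N.toFun α) ∈ U

/-- Left `𝒰_S`-Cauchy net. -/
def ULeftCauchy (𝒰 : Set (Set (X × X))) (N : Net.{u, v} X) : Prop :=
  ∀ U ∈ 𝒰, ∃ a₀ : N.ι, ∀ α β : N.ι,
    N.le a₀ α → N.le a₀ β → ¬ N.le β α → (N.toFun α, N.toFun β) ∈ U

/-- `M` is a conet of `N` in `(X, 𝒰)`. -/
def UIsConet (𝒰 : Set (Set (X × X))) (M : Net.{u, v} X) (N : Net.{u, w} X) : Prop :=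
  ∀ U ∈ 𝒰, ∃ (a₀ : N.ι) (b₀ : M.ι), ∀ (a : N.ι) (b : M.ι),
    N.le a₀ a → M.le b₀ b → (M.toFun b, N.toFun a) ∈ U

/-- `N` is right `𝒰`-cofinal to `M`. -/
def URightCofinalTo (𝒰 : Set (Set (X × X))) (N : Net.{u, v} X) (M : Net.{u, w} X) : Prop :=
  ∀ U ∈ 𝒰, ∃ a₀ : N.ι, ∀ a : N.ι, N.le a₀ a →
    ∃ b₀ : M.ι, ∀ b : M.ι, M.le b₀ b → (M.toFun b, N.toFun a) ∈ U

def URightCofinal (𝒰 : Set (Set (X × X))) (N : Net.{u, v} X) (M : Net.{u, w} X) : Prop :=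
  URightCofinalTo 𝒰 N M ∧ URightCofinalTo 𝒰 M N

/-- `N` is left `𝒰`-cofinal to `M`. -/
def ULeftCofinalTo (𝒰 : Set (Set (X × X))) (N : Net.{u, v} X) (M : Net.{u, w} X) : Prop :=
  ∀ U ∈ 𝒰, ∃ a₀ : N.ι, ∀ a : N.ι, N.le a₀ a →
    ∃ b₀ : M.ι, ∀ b : M.ι, M.le b₀ b → (N.toFun a, M.toFun b) ∈ U

def ULeftCofinal (𝒰 : Set (Set (X × X))) (N : Net.{u, v} X) (M : Net.{u, w} X) : Prop :=
  ULeftCofinalTo 𝒰 N M ∧ ULeftCofinalTo 𝒰 M N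

/-- Convergence of `N` to `x` with respect to `τ_𝒰`. -/
def UConvergesTo (𝒰 : Set (Set (X × X))) (N : Net.{u, v} X) (x : X) : Prop :=
  ∀ U ∈ 𝒰, ∃ a₀ : N.ι, ∀ a : N.ι, N.le a₀ a → (x, N.toFun a) ∈ U

end Net

/-- The defining conditions of a `𝒰`-cut for a pair of families of nets. -/
def UIsCutPair {X : Type u} (𝒰 : Set (Set (X × X))) (A B : Set (Net.{u, u} X)) : Prop :=
  (∀ N ∈ A, Net.URightCauchy 𝒰 N) ∧ (∀ M ∈ B, Net.ULeftCauchy 𝒰 M) ∧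
  (∀ N ∈ A, ∀ M ∈ B, Net.UIsConet 𝒰 M N) ∧
  (∀ N ∈ A, ∀ N' ∈ A, Net.URightCofinal 𝒰 N N') ∧
  (∀ M ∈ B, ∀ M' ∈ B, Net.ULeftCofinal 𝒰 M M')

/-- A `𝒰`-cut in a quasi-uniform space `(X, 𝒰)`. -/
structure UCut {X : Type u} (𝒰 : Set (Set (X × X))) : Type (u + 1) where
  A : Set (Net.{u, u} X)
  B : Set (Net.{u, u} X)
  isCutPair : UIsCutPair 𝒰 A B
  maximal : ∀ A' B', UIsCutPair 𝒰 A' B' → A ⊆ A' → B ⊆ B' → A' = A ∧ B' = B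

/-- `𝒰`-completeness: every `𝒰`-Cauchy net (a member of the first class of a
`𝒰`-cut) converges with respect to `τ_𝒰`. -/
def UComplete {X : Type u} (𝒰 : Set (Set (X × X))) : Prop :=
  ∀ ξ : UCut 𝒰, ∀ N ∈ ξ.A, ∃ x, Net.UConvergesTo 𝒰 N x

/-- The product quasi-uniformity on `∀ i, X i`. -/
def ProdU {I : Type u} {X : I → Type u} (𝒰 : ∀ i, Set (Set (X i × X i))) :
    Set (Set ((∀ i, X i) × (∀ i, X i))) :=
  {W | ∃ (s : Finset I) (U : ∀ i, Set (X i × X i)),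
    (∀ i ∈ s, U i ∈ 𝒰 i) ∧
    {p : (∀ i, X i) × (∀ i, X i) | ∀ i ∈ s, (p.1 i, p.2 i) ∈ U i} ⊆ W}

lemma conet_transfer {X : Type u} (d : X → X → ℝ) (hd : IsQPMetric d)
    (N M : Net.{u, u} X) (hMN : Net.RightCofinalTo d M N)
    (C : Net.{u, u} X) (hC : Net.IsConet d C N) : Net.IsConet d C M := by
  intro ε hε
  obtain ⟨α₀, hα₀⟩ := hMN (ε / 2) (by linarith)
  obtain ⟨a₀, b₀, hab⟩ := hC (ε / 2) (by linarith)
  refine ⟨α₀, b₀, fun β b hβ hb => ?_⟩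
  obtain ⟨n₀, hn₀⟩ := hα₀ β hβ
  obtain ⟨n, hn1, hn2⟩ := N.directed n₀ a₀
  have h1 := hn₀ n hn1
  have h2 := hab n b hn2 hb
  have := hd.2.2 (C.toFun b) (N.toFun n) (M.toFun β)
  linarith

/-- Two right `d`-cofinal nets have the same conets. -/
theorem statement2 {X : Type u} (d : X → X → ℝ) (hd : IsQPMetric d)
    (N M : Net.{u, u} X) (h : Net.RightCofinal d N M) :
    ∀ C : Net.{u, u} X, Net.IsConet d C N ↔ Net.IsConet d C M := by
  intro C
  exact ⟨conet_transfer d hd N M h.2 C, conet_transfer d hd M N h.1 C⟩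
end

section
/- In every quasi-pseudometric space (X,d), if two nets (y_β)_{β∈B} and (y_σ)_{σ∈Σ} are left d-cofinal, then they are conets of the same nets: (y_β)_{β∈B} is a conet of a net (x_a)_{a∈A} if and only if (y_σ)_{σ∈Σ} is a conet of (x_a)_{a∈A}. -/
universe u v w

lemma conet_of_leftCofinalTo {X : Type u} (d : X → X → ℝ) (hd : IsQPMetric d)
    (C C' : Net.{u, u} X) (h : Net.LeftCofinalTo d C' C)
    (N : Net.{u, u} X) (hc : Net.IsConet d C N) : Net.IsConet d C' N := by
  intro ε hε
  obtain ⟨a₀, b₀, hab⟩ := hc (ε / 2) (by linarith)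
  obtain ⟨σ₀, hσ⟩ := h (ε / 2) (by linarith)
  refine ⟨a₀, σ₀, fun a σ ha hσ' => ?_⟩
  obtain ⟨bσ, hbσ⟩ := hσ σ hσ'
  obtain ⟨b, hb1, hb2⟩ := C.directed b₀ bσ
  calc d (C'.toFun σ) (N.toFun a)
      ≤ d (C'.toFun σ) (C.toFun b) + d (C.toFun b) (N.toFun a) := hd.2.2 _ _ _
    _ < ε / 2 + ε / 2 := add_lt_add (hbσ b hb2) (hab a b ha hb1)
    _ = ε := by ring

/-- Two left `d`-cofinal nets are conets of the same nets. -/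
theorem statement3 {X : Type u} (d : X → X → ℝ) (hd : IsQPMetric d)
    (C C' : Net.{u, u} X) (h : Net.LeftCofinal d C C') :
    ∀ N : Net.{u, u} X, Net.IsConet d C N ↔ Net.IsConet d C' N := by
  intro N
  exact ⟨conet_of_leftCofinalTo d hd C C' h.2 N,
         conet_of_leftCofinalTo d hd C' C h.1 N⟩
end

section
/- In every quasi-pseudometric space (X,d), two right d-cofinal nets have the same limit points with respect to the topology τ_d, and two left d-cofinal nets have the same limit points with respect to the topology τ_{d⁻¹}. -/
universe u v w

theorem aux_right {X : Type u} (d : X → X → ℝ) (hd : IsQPMetric d)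
    {N M : Net.{u, u} X} (h : Net.RightCofinalTo d M N) {x : X}
    (hN : Net.ConvergesTo d N x) : Net.ConvergesTo d M x := by
  intro ε hε
  obtain ⟨b₀, hb₀⟩ := h (ε / 2) (by linarith)
  refine ⟨b₀, fun b hb => ?_⟩
  obtain ⟨a₁, ha₁⟩ := hb₀ b hb
  obtain ⟨a₂, ha₂⟩ := hN (ε / 2) (by linarith)
  obtain ⟨a, ha, ha'⟩ := N.directed a₁ a₂
  have h1 := ha₁ a ha
  have h2 := ha₂ a ha'
  have := hd.2.2 x (N.toFun a) (M.toFun b)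
  linarith

theorem aux_left {X : Type u} (d : X → X → ℝ) (hd : IsQPMetric d)
    {N M : Net.{u, u} X} (h : Net.LeftCofinalTo d M N) {x : X}
    (hN : Net.RevConvergesTo d N x) : Net.RevConvergesTo d M x := by
  intro ε hε
  obtain ⟨b₀, hb₀⟩ := h (ε / 2) (by linarith)
  refine ⟨b₀, fun b hb => ?_⟩
  obtain ⟨a₁, ha₁⟩ := hb₀ b hb
  obtain ⟨a₂, ha₂⟩ := hN (ε / 2) (by linarith)
  obtain ⟨a, ha, ha'⟩ := N.directed a₁ a₂
  have h1 := ha₁ a ha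
  have h2 := ha₂ a ha'
  have := hd.2.2 (M.toFun b) (N.toFun a) x
  linarith

/-- Two right `d`-cofinal nets have the same limit points for `τ_d`,
and two left `d`-cofinal nets have the same limit points for `τ_{d⁻¹}`. -/
theorem statement4 {X : Type u} (d : X → X → ℝ) (hd : IsQPMetric d)
    (N M : Net.{u, u} X) :
    (Net.RightCofinal d N M →
      ∀ x : X, Net.ConvergesTo d N x ↔ Net.ConvergesTo d M x) ∧
    (Net.LeftCofinal d N M →
      ∀ x : X, Net.RevConvergesTo d N x ↔ Net.RevConvergesTo d M x) := by
  constructor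
  · exact fun h x => ⟨aux_right d hd h.2, aux_right d hd h.1⟩
  · exact fun h x => ⟨aux_left d hd h.2, aux_left d hd h.1⟩
end

section
/- Let (X,d) be a quasi-pseudometric space and let ξ and ξ′ be δ-cuts in (X,d). If the first classes satisfy A_ξ ∩ A_{ξ′} ≠ ∅, then A_ξ = A_{ξ′}. -/
universe u v w

/-- Right cofinality (to) is transitive. -/
lemma rightCofinalTo_trans {X : Type u} (d : X → X → ℝ) (hd : IsQPMetric d)
    {N M P : Net.{u, u} X} (h1 : Net.RightCofinalTo d N M)
    (h2 : Net.RightCofinalTo d M P) : Net.RightCofinalTo d N P := by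
  intro ε hε
  obtain ⟨a₀, ha₀⟩ := h1 (ε / 2) (by linarith)
  obtain ⟨b₁, hb₁⟩ := h2 (ε / 2) (by linarith)
  refine ⟨a₀, fun a ha => ?_⟩
  obtain ⟨b₀, hb₀⟩ := ha₀ a ha
  obtain ⟨b, hb, hb'⟩ := M.directed b₀ b₁
  obtain ⟨c₀, hc₀⟩ := hb₁ b hb'
  refine ⟨c₀, fun c hc => ?_⟩
  calc d (P.toFun c) (N.toFun a)
      ≤ d (P.toFun c) (M.toFun b) + d (M.toFun b) (N.toFun a) := hd.2.2 _ _ _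
    _ < ε / 2 + ε / 2 := add_lt_add (hc₀ c hc) (hb₀ b hb)
    _ = ε := by linarith

/-- Transfer of the conet property along right cofinality. -/
lemma isConet_of_rightCofinalTo {X : Type u} (d : X → X → ℝ) (hd : IsQPMetric d)
    {M N₀ N : Net.{u, u} X} (hc : Net.IsConet d M N₀)
    (hcof : Net.RightCofinalTo d N N₀) : Net.IsConet d M N := by
  intro ε hε
  obtain ⟨a₀, ha₀⟩ := hcof (ε / 2) (by linarith)
  obtain ⟨c₁, b₀, hcb⟩ := hc (ε / 2) (by linarith)
  refine ⟨a₀, b₀, fun a b ha hb => ?_⟩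
  obtain ⟨c₀, hc₀⟩ := ha₀ a ha
  obtain ⟨c, hc, hc'⟩ := N₀.directed c₀ c₁
  calc d (M.toFun b) (N.toFun a)
      ≤ d (M.toFun b) (N₀.toFun c) + d (N₀.toFun c) (N.toFun a) := hd.2.2 _ _ _
    _ < ε / 2 + ε / 2 := add_lt_add (hcb c b hc' hb) (hc₀ c hc)
    _ = ε := by linarith

/-- If `N₀` lies in the first classes of two cut pairs (with a common candidate
union on the first coordinate), the union of the first classes with the first
second class is again a cut pair. -/
lemma union_isCutPair {X : Type u} (d : X → X → ℝ) (hd : IsQPMetric d)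
    {A A' B B' : Set (Net.{u, u} X)} (h1 : IsCutPair d A B) (h2 : IsCutPair d A' B')
    {N₀ : Net.{u, u} X} (hN₀ : N₀ ∈ A) (hN₀' : N₀ ∈ A') :
    IsCutPair d (A ∪ A') B := by
  obtain ⟨h1R, h1L, h1C, h1A, h1B⟩ := h1
  obtain ⟨h2R, h2L, h2C, h2A, h2B⟩ := h2
  refine ⟨?_, h1L, ?_, ?_, h1B⟩
  · rintro N (hN | hN)
    · exact h1R N hN
    · exact h2R N hN
  · rintro N (hN | hN) M hM
    · exact h1C N hN M hM
    · exact isConet_of_rightCofinalTo d hd (h1C N₀ hN₀ M hM) (h2A N hN N₀ hN₀').1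
  · rintro N (hN | hN) N' (hN' | hN')
    · exact h1A N hN N' hN'
    · exact ⟨rightCofinalTo_trans d hd (h1A N hN N₀ hN₀).1 (h2A N₀ hN₀' N' hN').1,
        rightCofinalTo_trans d hd (h2A N' hN' N₀ hN₀').1 (h1A N₀ hN₀ N hN).1⟩
    · exact ⟨rightCofinalTo_trans d hd (h2A N hN N₀ hN₀').1 (h1A N₀ hN₀ N' hN').1,
        rightCofinalTo_trans d hd (h1A N' hN' N₀ hN₀).1 (h2A N₀ hN₀' N hN).1⟩
    · exact h2A N hN N' hN'

/-- If the first classes of two `δ`-cuts intersect, they are equal. -/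
theorem statement5 {X : Type u} (d : X → X → ℝ) (hd : IsQPMetric d)
    (ξ ξ' : DeltaCut d) (h : (ξ.A ∩ ξ'.A).Nonempty) :
    ξ.A = ξ'.A := by
  obtain ⟨N₀, hN₀, hN₀'⟩ := h
  have hp1 := union_isCutPair d hd ξ.isCutPair ξ'.isCutPair hN₀ hN₀'
  have hp2 := union_isCutPair d hd ξ'.isCutPair ξ.isCutPair hN₀' hN₀
  have h1 := (ξ.maximal (ξ.A ∪ ξ'.A) ξ.B hp1 Set.subset_union_left (subset_refl _)).1
  have h2 := (ξ'.maximal (ξ'.A ∪ ξ.A) ξ'.B hp2 Set.subset_union_left (subset_refl _)).1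
  apply Set.Subset.antisymm
  · intro x hx; rw [← h2]; exact Or.inr hx
  · intro x hx; rw [← h1]; exact Or.inr hx
end

section
/- Let (X,d) be a quasi-pseudometric space, let ξ′ and ξ′′ be δ-cuts in (X,d) with A_{ξ′} ≠ A_{ξ′′}, and let r ≥ 0. If for some choice of nets (x_a)_{a∈A} ∈ A_{ξ′} and (x_γ)_{γ∈Γ} ∈ B_{ξ′′} one has: for each ε > 0 there are a_ε ∈ A and γ_ε ∈ Γ with d(x_a, x_γ) < r + ε whenever a ≥ a_ε and γ ≥ γ_ε, then the same holds for every other choice of nets (x_β)_{β∈B} ∈ A_{ξ′} and (x_δ)_{δ∈Δ} ∈ B_{ξ′′}. Hence the relation d̂(ξ′,ξ′′) ≤ r depends only on ξ′, ξ′′ and r, not on the chosen representative nets. -/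
universe u v w

/-- The truth of `d̂(ξ′,ξ′′) ≤ r` does not depend on the choice of
the representative nets. -/
theorem statement6 {X : Type u} (d : X → X → ℝ) (hd : IsQPMetric d)
    (ξ' ξ'' : DeltaCut d) (hne : ξ'.A ≠ ξ''.A) (r : ℝ) (hr : 0 ≤ r)
    (N : Net.{u, u} X) (hN : N ∈ ξ'.A) (M : Net.{u, u} X) (hM : M ∈ ξ''.B)
    (h : ViaLe d N M r) :
    ∀ N' ∈ ξ'.A, ∀ M' ∈ ξ''.B, ViaLe d N' M' r := by
  intro N' hN' M' hM' ε hε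
  have hε3 : (0:ℝ) < ε / 3 := by linarith
  -- right cofinality of N to N' (gives d(N' β, N a) small)
  obtain ⟨a₂, hcof⟩ := (ξ'.isCutPair.2.2.2.1 N hN N' hN').1 (ε / 3) hε3
  -- left cofinality of M to M' (gives d(M b, M' δ) small)
  obtain ⟨b₂, hcofM⟩ := (ξ''.isCutPair.2.2.2.2 M hM M' hM').1 (ε / 3) hε3
  obtain ⟨a₁, b₁, hVia⟩ := h (ε / 3) hε3
  obtain ⟨a, ha₁, ha₂⟩ := N.directed a₁ a₂
  obtain ⟨b, hb₁, hb₂⟩ := M.directed b₁ b₂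
  obtain ⟨β₀, hβ⟩ := hcof a ha₂
  obtain ⟨δ₀, hδ⟩ := hcofM b hb₂
  refine ⟨β₀, δ₀, fun β δ hβ' hδ' => ?_⟩
  have h1 := hβ β hβ'
  have h2 := hVia a b ha₁ hb₁
  have h3 := hδ δ hδ'
  have t1 := hd.2.2 (N'.toFun β) (N.toFun a) (M'.toFun δ)
  have t2 := hd.2.2 (N.toFun a) (M.toFun b) (M'.toFun δ)
  linarith
end

section
/- Let (X,d) be a quasi-pseudometric space, let ξ′ and ξ′′ be δ-cuts in (X,d) with A_{ξ′} ≠ A_{ξ′′}, and let (x_a)_{a∈A} ∈ A_{ξ′} and (x_γ)_{γ∈Γ} ∈ B_{ξ′′}. Then d̂(ξ′,ξ′′) = lim_{a,γ} d(x_a, x_γ), i.e. writing r = d̂(ξ′,ξ′′), for every ε > 0 there are a_ε ∈ A and γ_ε ∈ Γ such that |d(x_a, x_γ) − r| < ε whenever a ≥ a_ε and γ ≥ γ_ε. -/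
universe u v w

/-- Transfer of `ViaLe` bounds along cofinality. -/
lemma viaLe_transfer {X : Type u} (d : X → X → ℝ) (hd : IsQPMetric d)
    {N M N' M' : Net.{u, u} X} (hNN' : Net.RightCofinalTo d N N')
    (hMM' : Net.LeftCofinalTo d M M') {r : ℝ} (h : ViaLe d N M r) :
    ViaLe d N' M' r := by
  intro ε hε
  have hε3 : 0 < ε / 3 := by linarith
  obtain ⟨a₁, γ₁, hbound⟩ := h (ε / 3) hε3
  obtain ⟨a₂, hNc⟩ := hNN' (ε / 3) hε3
  obtain ⟨γ₂, hMc⟩ := hMM' (ε / 3) hε3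
  obtain ⟨as, ha1, ha0⟩ := N.directed a₁ a₂
  obtain ⟨gs, hg1, hg0⟩ := M.directed γ₁ γ₂
  obtain ⟨b₀, hb⟩ := hNc as ha0
  obtain ⟨δ₀, hδ⟩ := hMc gs hg0
  refine ⟨b₀, δ₀, fun b δ hbb hdd => ?_⟩
  have h1 := hb b hbb
  have h2 := hbound as gs ha1 hg1
  have h3 := hδ δ hdd
  have t1 := hd.2.2 (N'.toFun b) (N.toFun as) (M'.toFun δ)
  have t2 := hd.2.2 (N.toFun as) (M.toFun gs) (M'.toFun δ)
  linarith

/-- If `A_{ξ′} ≠ A_{ξ′′}` then `d̂(ξ′,ξ′′) = lim_{a,γ} d(x_a, x_γ)`. -/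
theorem statement7 {X : Type u} (d : X → X → ℝ) (hd : IsQPMetric d)
    (ξ' ξ'' : DeltaCut d) (hne : ξ'.A ≠ ξ''.A)
    (N : Net.{u, u} X) (hN : N ∈ ξ'.A) (M : Net.{u, u} X) (hM : M ∈ ξ''.B) :
    ∀ ε : ℝ, 0 < ε → ∃ (a₀ : N.ι) (b₀ : M.ι), ∀ (a : N.ι) (b : M.ι),
      N.le a₀ a → M.le b₀ b →
      |d (N.toFun a) (M.toFun b) - hatD d ξ' ξ''| < ε := by
  set S : Set ℝ := {r : ℝ | 0 ≤ r ∧ hatLe d ξ' ξ'' r} with hSdef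
  have hrfl : hatD d ξ' ξ'' = sInf S := rfl
  have hbdd : BddBelow S := ⟨0, fun x hx => hx.1⟩
  have hNN : Net.RightCofinalTo d N N := (ξ'.isCutPair.2.2.2.1 N hN N hN).1
  have hMM : Net.LeftCofinalTo d M M := (ξ''.isCutPair.2.2.2.2 M hM M hM).1
  have hNMtoLe : ∀ r : ℝ, ViaLe d N M r → hatLe d ξ' ξ'' r := by
    intro r hr
    refine Or.inr (fun N' hN' M' hM' => ?_)
    exact viaLe_transfer d hd (ξ'.isCutPair.2.2.2.1 N hN N' hN').1
      (ξ''.isCutPair.2.2.2.2 M hM M' hM').1 hr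
  -- S is nonempty
  have hSne : S.Nonempty := by
    obtain ⟨a₀, hc⟩ := hNN 1 one_pos
    obtain ⟨γ₀, hcM⟩ := hMM 1 one_pos
    obtain ⟨b₀, hb⟩ := hc a₀ (N.le_refl a₀)
    obtain ⟨δ₀, hδ⟩ := hcM γ₀ (M.le_refl γ₀)
    have hC : 0 ≤ d (N.toFun a₀) (M.toFun γ₀) := hd.1 _ _
    refine ⟨d (N.toFun a₀) (M.toFun γ₀) + 2, ⟨by linarith, hNMtoLe _ ?_⟩⟩
    intro ε' hε'
    refine ⟨b₀, δ₀, fun a γ ha hγ => ?_⟩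
    have h1 := hb a ha
    have h2 := hδ γ hγ
    have t1 := hd.2.2 (N.toFun a) (N.toFun a₀) (M.toFun γ)
    have t2 := hd.2.2 (N.toFun a₀) (M.toFun γ₀) (M.toFun γ)
    linarith
  intro ε hε
  -- upper estimate
  obtain ⟨s, hsS, hs⟩ := Real.lt_sInf_add_pos hSne (half_pos hε)
  have hVs : ViaLe d N M s := by
    rcases hsS.2 with h | h
    · exact absurd h hne
    · exact h N hN M hM
  obtain ⟨a₁, γ₁, hup⟩ := hVs (ε / 2) (half_pos hε)
  -- lower estimate preparation
  have hε4 : 0 < ε / 4 := by linarith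
  obtain ⟨a₂, hc⟩ := hNN (ε / 4) hε4
  obtain ⟨γ₂, hcM⟩ := hMM (ε / 4) hε4
  obtain ⟨a₀, h1a, h2a⟩ := N.directed a₁ a₂
  obtain ⟨γ₀, h1g, h2g⟩ := M.directed γ₁ γ₂
  refine ⟨a₀, γ₀, fun a γ ha hγ => ?_⟩
  have haa1 : N.le a₁ a := N.le_trans _ _ _ h1a ha
  have hgg1 : M.le γ₁ γ := M.le_trans _ _ _ h1g hγ
  have hupper : d (N.toFun a) (M.toFun γ) < sInf S + ε := by
    have := hup a γ haa1 hgg1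
    linarith
  have hlower : sInf S - ε < d (N.toFun a) (M.toFun γ) := by
    by_contra hcon
    push_neg at hcon
    obtain ⟨b₀, hb⟩ := hc a (N.le_trans _ _ _ h2a ha)
    obtain ⟨δ₀, hδ⟩ := hcM γ (M.le_trans _ _ _ h2g hγ)
    have hV : ViaLe d N M (sInf S - ε / 2) := by
      intro ε' hε'
      refine ⟨b₀, δ₀, fun b δ hbb hdd => ?_⟩
      have h1 := hb b hbb
      have h2 := hδ δ hdd
      have t1 := hd.2.2 (N.toFun b) (N.toFun a) (M.toFun δ)
      have t2 := hd.2.2 (N.toFun a) (M.toFun γ) (M.toFun δ)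
      linarith
    by_cases hpos : 0 ≤ sInf S - ε / 2
    · have hmem : sInf S - ε / 2 ∈ S := ⟨hpos, hNMtoLe _ hV⟩
      have := csInf_le hbdd hmem
      linarith
    · push_neg at hpos
      obtain ⟨b', δ', hv⟩ := hV (-(sInf S - ε / 2)) (by linarith)
      have h1 := hv b' δ' (N.le_refl _) (M.le_refl _)
      have h2 := hd.1 (N.toFun b') (M.toFun δ')
      linarith
  rw [hrfl, abs_lt]
  constructor <;> linarith
end

section
/- Let (X,d) be a quasi-pseudometric space. Then for any x, y ∈ X, d̂(φ(x), φ(y)) = d(x,y); that is, the canonical map φ : X → X̂ is distance-preserving. -/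
universe u v w

/-- The canonical map `φ : X → X̂` is distance-preserving:
`d̂(φ(x), φ(y)) = d(x, y)`. -/
theorem statement9 {X : Type u} (d : X → X → ℝ) (hd : IsQPMetric d)
    (x y : X) (ξx ξy : DeltaCut d)
    (hx : IsPhiCut d x ξx) (hy : IsPhiCut d y ξy) :
    hatD d ξx ξy = d x y := by
  obtain ⟨hd0, hdd, hdt⟩ := hd
  have hmem : d x y ∈ {r : ℝ | 0 ≤ r ∧ hatLe d ξx ξy r} := by
    refine ⟨hd0 x y, Or.inr ?_⟩
    intro N hN M hM ε hε
    obtain ⟨a₀, h1⟩ := (ξx.isCutPair.2.2.2.1 (constNet x) hx.1 N hN).1 (ε/2) (by linarith)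
    obtain ⟨b₀N, h1⟩ := h1 a₀ ((constNet x).le_refl a₀)
    obtain ⟨c₀, h2⟩ := (ξy.isCutPair.2.2.2.2 (constNet y) hy.2 M hM).1 (ε/2) (by linarith)
    obtain ⟨b₀M, h2⟩ := h2 c₀ ((constNet y).le_refl c₀)
    refine ⟨b₀N, b₀M, fun a b ha hb => ?_⟩
    have hxa : d (N.toFun a) x < ε / 2 := h1 a ha
    have hyb : d y (M.toFun b) < ε / 2 := h2 b hb
    linarith [hdt (N.toFun a) x (M.toFun b), hdt x y (M.toFun b)]
  have hlow : ∀ r ∈ {r : ℝ | 0 ≤ r ∧ hatLe d ξx ξy r}, d x y ≤ r := by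
    rintro r ⟨hr0, hle⟩
    cases hle with
    | inl hA =>
      have hyA : constNet y ∈ ξx.A := hA ▸ hy.1
      have hc := ξx.isCutPair.2.2.1 (constNet y) hyA (constNet x) hx.2
      have : d x y ≤ 0 := by
        by_contra h; push_neg at h
        obtain ⟨a₀, b₀, hc⟩ := hc (d x y) h
        exact absurd (hc a₀ b₀ trivial trivial) (lt_irrefl _)
      linarith
    | inr h =>
      by_contra hlt; push_neg at hlt
      obtain ⟨a₀, b₀, hv⟩ := h (constNet x) hx.1 (constNet y) hy.2 (d x y - r) (by linarith)
      have h' : d x y < r + (d x y - r) := hv a₀ b₀ trivial trivial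
      linarith
  exact le_antisymm (csInf_le ⟨0, fun r hr => hr.1⟩ hmem) (le_csInf ⟨_, hmem⟩ hlow)
end

section
/- Let (X,d) be a quasi-pseudometric space and let ξ = (A_ξ, B_ξ) be a δ-cut in (X,d). If (x_a)_{a∈A} ∈ A_ξ then d̂(ξ, φ(x_a)) → 0 (for each ε > 0 there is a_ε ∈ A with d̂(ξ, φ(x_a)) < ε for all a ≥ a_ε), and if (x_β)_{β∈B} ∈ B_ξ then d̂(φ(x_β), ξ) → 0. -/
universe u v w

/-- If `hatLe d ξ ζ (ε/2)` then `hatD d ξ ζ < ε`. -/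
lemma hatD_lt_of_hatLe {X : Type u} (d : X → X → ℝ) (ξ ζ : DeltaCut d) {ε : ℝ}
    (hε : 0 < ε) (h : hatLe d ξ ζ (ε / 2)) : hatD d ξ ζ < ε := by
  have hle : hatD d ξ ζ ≤ ε / 2 :=
    csInf_le ⟨0, fun r hr => hr.1⟩ ⟨by linarith, h⟩
  linarith

/-- If `(x_a) ∈ A_ξ` then `d̂(ξ, φ(x_a)) → 0`, and if
`(x_β) ∈ B_ξ` then `d̂(φ(x_β), ξ) → 0`. -/
theorem statement10 {X : Type u} (d : X → X → ℝ) (hd : IsQPMetric d)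
    (ξ : DeltaCut d) :
    (∀ N ∈ ξ.A, ∀ ε : ℝ, 0 < ε → ∃ a₀ : N.ι, ∀ a : N.ι, N.le a₀ a →
      ∀ ζ : DeltaCut d, IsPhiCut d (N.toFun a) ζ → hatD d ξ ζ < ε) ∧
    (∀ M ∈ ξ.B, ∀ ε : ℝ, 0 < ε → ∃ b₀ : M.ι, ∀ b : M.ι, M.le b₀ b →
      ∀ ζ : DeltaCut d, IsPhiCut d (M.toFun b) ζ → hatD d ζ ξ < ε) := by
  obtain ⟨hnn, hdiag, htri⟩ := hd
  constructor
  · intro N hN ε hε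
    -- right Cauchy tail of N at ε/4
    obtain ⟨a₀, hC⟩ := ξ.isCutPair.1 N hN (ε / 4) (by linarith)
    refine ⟨a₀, fun a ha ζ hζ => hatD_lt_of_hatLe d ξ ζ hε ?_⟩
    right
    intro N' hN' M hM ε' hε'
    -- right cofinality of N' to N within ξ.A
    obtain ⟨a₁, hcof⟩ := (ξ.isCutPair.2.2.2.1 N hN N' hN').1 (ε' / 2) (by linarith)
    -- left cofinality of constNet (N.toFun a) to M within ζ.B
    obtain ⟨u, hcm⟩ :=
      (ζ.isCutPair.2.2.2.2 (constNet (N.toFun a)) hζ.2 M hM).1 (ε / 4 + ε' / 2)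
        (by linarith)
    obtain ⟨b₁, hb₁⟩ := hcm u trivial
    -- a tail of N' that is (ε'/2 + ε/4)-close to N.toFun a
    have key : ∃ c₀ : N'.ι, ∀ a' : N'.ι, N'.le c₀ a' →
        d (N'.toFun a') (N.toFun a) < ε' / 2 + ε / 4 := by
      obtain ⟨c, hc1, hc2⟩ := N.directed a a₁
      by_cases hca : N.le c a
      · have ha₁a : N.le a₁ a := N.le_trans _ _ _ hc2 hca
        obtain ⟨c₀, hc₀⟩ := hcof a ha₁a
        exact ⟨c₀, fun a' ha' => lt_of_lt_of_le (hc₀ a' ha') (by linarith)⟩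
      · have hcC : d (N.toFun c) (N.toFun a) < ε / 4 :=
          hC a c ha (N.le_trans _ _ _ ha hc1) hca
        obtain ⟨c₀, hc₀⟩ := hcof c hc2
        refine ⟨c₀, fun a' ha' => ?_⟩
        calc d (N'.toFun a') (N.toFun a)
            ≤ d (N'.toFun a') (N.toFun c) + d (N.toFun c) (N.toFun a) :=
              htri _ _ _
          _ < ε' / 2 + ε / 4 := by have := hc₀ a' ha'; linarith
    obtain ⟨c₀, hc₀⟩ := key
    refine ⟨c₀, b₁, fun a' b ha' hb => ?_⟩
    have h1 := hc₀ a' ha'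
    have h2 : d (N.toFun a) (M.toFun b) < ε / 4 + ε' / 2 := hb₁ b hb
    calc d (N'.toFun a') (M.toFun b)
        ≤ d (N'.toFun a') (N.toFun a) + d (N.toFun a) (M.toFun b) := htri _ _ _
      _ < ε / 2 + ε' := by linarith
  · intro M hM ε hε
    -- left Cauchy tail of M at ε/4
    obtain ⟨b₀, hC⟩ := ξ.isCutPair.2.1 M hM (ε / 4) (by linarith)
    refine ⟨b₀, fun b hb ζ hζ => hatD_lt_of_hatLe d ζ ξ hε ?_⟩
    right
    intro N' hN' M' hM'
    intro ε' hε'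
    -- right cofinality of N' to constNet (M.toFun b) within ζ.A
    obtain ⟨u, hcn⟩ :=
      (ζ.isCutPair.2.2.2.1 (constNet (M.toFun b)) hζ.1 N' hN').1 (ε / 4 + ε' / 2)
        (by linarith)
    obtain ⟨a₁, ha₁⟩ := hcn u trivial
    -- left cofinality of M to M' within ξ.B
    obtain ⟨c₁, hcof⟩ := (ξ.isCutPair.2.2.2.2 M hM M' hM').1 (ε' / 2) (by linarith)
    -- a tail of M' that is (ε/4 + ε'/2)-close to M.toFun b (from the left)
    have key : ∃ c₀ : M'.ι, ∀ b' : M'.ι, M'.le c₀ b' →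
        d (M.toFun b) (M'.toFun b') < ε / 4 + ε' / 2 := by
      obtain ⟨c, hc1, hc2⟩ := M.directed b c₁
      by_cases hcb : M.le c b
      · have hc₁b : M.le c₁ b := M.le_trans _ _ _ hc2 hcb
        obtain ⟨c₀, hc₀⟩ := hcof b hc₁b
        exact ⟨c₀, fun b' hb' => lt_of_lt_of_le (hc₀ b' hb') (by linarith)⟩
      · have hcC : d (M.toFun b) (M.toFun c) < ε / 4 :=
          hC b c hb (M.le_trans _ _ _ hb hc1) hcb
        obtain ⟨c₀, hc₀⟩ := hcof c hc2
        refine ⟨c₀, fun b' hb' => ?_⟩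
        calc d (M.toFun b) (M'.toFun b')
            ≤ d (M.toFun b) (M.toFun c) + d (M.toFun c) (M'.toFun b') :=
              htri _ _ _
          _ < ε / 4 + ε' / 2 := by have := hc₀ b' hb'; linarith
    obtain ⟨c₀, hc₀⟩ := key
    refine ⟨a₁, c₀, fun a' b' ha' hb' => ?_⟩
    have h1 : d (N'.toFun a') (M.toFun b) < ε / 4 + ε' / 2 := ha₁ a' ha'
    have h2 := hc₀ b' hb'
    calc d (N'.toFun a') (M'.toFun b')
        ≤ d (N'.toFun a') (M.toFun b) + d (M.toFun b) (M'.toFun b') := htri _ _ _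
      _ < ε / 2 + ε' := by linarith
end

section
/- A quasi-metric space (X,d) is δ-complete if and only if every right K-Cauchy sequence in (X,d) converges to a point of X with respect to τ_d. -/
universe u v w

private lemma forall_lt_imp_le_zero {r : ℝ} (h : ∀ n : ℕ, r < 1 / (n + 1)) : r ≤ 0 := by
  by_contra hr
  push_neg at hr
  obtain ⟨n, hn⟩ := exists_nat_one_div_lt hr
  exact absurd (h n) (not_lt.2 hn.le)

/-- Key lemma: a right `d_S`-Cauchy net that is right `d`-cofinal to itself converges,
provided every right K-Cauchy sequence converges. -/
lemma key_converges {X : Type u} {d : X → X → ℝ} (hd : IsQMetric d)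
    (hseq : ∀ t : ℕ → X, RightKCauchySeq d t → ∃ x, SeqConvergesTo d t x)
    (N : Net.{u, u} X) (hC : Net.RightCauchy d N)
    (hS : Net.RightCofinalTo d N N) : ∃ x, Net.ConvergesTo d N x := by
  classical
  obtain ⟨⟨hnn, hrefl, htri⟩, hsep⟩ := hd
  have pos : ∀ n : ℕ, (0:ℝ) < 1 / (n + 1) := fun n => by positivity
  choose c hc using fun n : ℕ => hC (1 / (n + 1)) (pos n)
  choose a ha using fun n : ℕ => hS (1 / (n + 1)) (pos n)
  choose ub hub₁ hub₂ using N.directed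
  let B : ℕ → N.ι → N.ι := fun n q =>
    if h : ∃ b₀, ∀ b, N.le b₀ b → d (N.toFun b) (N.toFun q) < 1 / (n + 1) then h.choose else q
  have hB : ∀ n q, N.le (a n) q → ∀ b, N.le (B n q) b →
      d (N.toFun b) (N.toFun q) < 1 / (n + 1) := by
    intro n q hq b hb
    have h : ∃ b₀, ∀ b, N.le b₀ b → d (N.toFun b) (N.toFun q) < 1 / (n + 1) := ha n q hq
    simp only [B, dif_pos h] at hb
    exact h.choose_spec b hb
  let u : ℕ → N.ι := fun n => Nat.rec (ub (c 0) (a 0))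
      (fun n un => ub (ub un (B n un)) (ub (c (n+1)) (a (n+1)))) n
  have hu_succ : ∀ n, u (n+1) = ub (ub (u n) (B n (u n))) (ub (c (n+1)) (a (n+1))) :=
    fun n => rfl
  have hcu : ∀ n, N.le (c n) (u n) := by
    intro n
    cases n with
    | zero => exact hub₁ _ _
    | succ n =>
      rw [hu_succ]
      exact N.le_trans _ _ _ (hub₁ _ _) (hub₂ _ _)
  have hau : ∀ n, N.le (a n) (u n) := by
    intro n
    cases n with
    | zero => exact hub₂ _ _
    | succ n =>
      rw [hu_succ]
      exact N.le_trans _ _ _ (hub₂ _ _) (hub₂ _ _)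
  have hstep : ∀ n, N.le (u n) (u (n+1)) := by
    intro n
    rw [hu_succ]
    exact N.le_trans _ _ _ (hub₁ _ _) (hub₁ _ _)
  have hBu : ∀ n, N.le (B n (u n)) (u (n+1)) := by
    intro n
    rw [hu_succ]
    exact N.le_trans _ _ _ (hub₂ _ _) (hub₁ _ _)
  have humono : ∀ m n : ℕ, m ≤ n → N.le (u m) (u n) := by
    intro m n h
    induction h with
    | refl => exact N.le_refl _
    | step _ ih => exact N.le_trans _ _ _ ih (hstep _)
  have hstar : ∀ n b, N.le (u (n+1)) b → d (N.toFun b) (N.toFun (u n)) < 1 / (n + 1) :=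
    fun n b hb => hB n (u n) (hau n) b (N.le_trans _ _ _ (hBu n) hb)
  by_cases hcof : ∀ g, ∃ p, N.le g p ∧ ∀ n, N.le (u n) p
  · -- the dominators of the spine are cofinal; values collapse
    obtain ⟨g, -, hgD⟩ := hcof (u 0)
    have col0 : ∀ p q, (∀ n, N.le (u n) p) → (∀ n, N.le (u n) q) → ¬ N.le p q →
        N.toFun p = N.toFun q := by
      intro p q hp hq hnpq
      apply hsep
      refine le_antisymm (forall_lt_imp_le_zero fun n => ?_) (hnn _ _)
      exact hc n q p (N.le_trans _ _ _ (hcu n) (hq n)) (N.le_trans _ _ _ (hcu n) (hp n)) hnpq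
    have col : ∀ p q, (∀ n, N.le (u n) p) → (∀ n, N.le (u n) q) → N.toFun p = N.toFun q := by
      intro p q hp hq
      apply hsep
      refine le_antisymm (forall_lt_imp_le_zero fun n => ?_) (hnn _ _)
      obtain ⟨b', hb1, hb2⟩ := N.directed (B n q) p
      by_cases h' : N.le b' p
      · exact hB n q (N.le_trans _ _ _ (hau n) (hq n)) p (N.le_trans _ _ _ hb1 h')
      · have heq : N.toFun b' = N.toFun p :=
          col0 b' p (fun k => N.le_trans _ _ _ (hp k) hb2) hp h'
        calc d (N.toFun p) (N.toFun q) = d (N.toFun b') (N.toFun q) := by rw [heq]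
          _ < 1 / (n + 1) := hB n q (N.le_trans _ _ _ (hau n) (hq n)) b' hb1
    refine ⟨N.toFun g, fun ε hε => ⟨g, fun p hp => ?_⟩⟩
    have hpe : N.toFun p = N.toFun g :=
      col p g (fun k => N.le_trans _ _ _ (hgD k) hp) hgD
    rw [hpe, hrefl]
    exact hε
  · -- the spine escapes every point of a tail; use the sequence along the spine
    push_neg at hcof
    obtain ⟨g₀, hg₀⟩ := hcof
    have hK : RightKCauchySeq d (fun n => N.toFun (u n)) := by
      intro ε hε
      obtain ⟨k, hk⟩ := exists_nat_one_div_lt hε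
      refine ⟨k, fun n m hm hmn => ?_⟩
      rcases eq_or_lt_of_le hmn with h | h
      · rw [← h, hrefl]
        exact hε
      · have h1 : d (N.toFun (u n)) (N.toFun (u m)) < 1 / (m + 1) :=
          hstar m (u n) (humono (m+1) n h)
        have h2 : (1:ℝ) / (m + 1) ≤ 1 / (k + 1) := by
          apply one_div_le_one_div_of_le
          · positivity
          · exact_mod_cast Nat.add_le_add_right hm 1
        exact h1.trans_le (h2.trans hk.le)
    obtain ⟨x, hx⟩ := hseq _ hK
    refine ⟨x, fun ε hε => ?_⟩
    obtain ⟨k, hk⟩ := exists_nat_one_div_lt (half_pos hε)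
    obtain ⟨k₁, hk₁⟩ := hx (ε/2) (half_pos hε)
    obtain ⟨g, hg1, hg2⟩ := N.directed g₀ (c k)
    refine ⟨g, fun p hp => ?_⟩
    obtain ⟨m, hm⟩ := hg₀ p (N.le_trans _ _ _ hg1 hp)
    set n := max (max m k) k₁ with hn
    have hnm : m ≤ n := le_trans (le_max_left _ _) (le_max_left _ _)
    have hnk : k ≤ n := le_trans (le_max_right m k) (le_max_left _ _)
    have hnk₁ : k₁ ≤ n := le_max_right _ _
    have h1 : ¬ N.le (u n) p := fun h => hm (N.le_trans _ _ _ (humono m n hnm) h)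
    have h2 : d (N.toFun (u n)) (N.toFun p) < 1 / (k + 1) :=
      hc k p (u n) (N.le_trans _ _ _ hg2 hp)
        (N.le_trans _ _ _ (hcu k) (humono k n hnk)) h1
    have h3 : d x (N.toFun (u n)) < ε / 2 := hk₁ n hnk₁
    calc d x (N.toFun p) ≤ d x (N.toFun (u n)) + d (N.toFun (u n)) (N.toFun p) := htri _ _ _
      _ < ε / 2 + ε / 2 := add_lt_add h3 (h2.trans hk)
      _ = ε := add_halves ε

/-- A sequence viewed as a net indexed by `ULift ℕ` (so it lives in `Net.{u, u}`). -/
def seqNetU {X : Type u} (t : ℕ → X) : Net.{u, u} X :=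
  ⟨ULift ℕ, fun a b => a.down ≤ b.down, fun _ => le_refl _, fun _ _ _ h h' => le_trans h h',
   ⟨⟨0⟩⟩, fun a b => ⟨⟨max a.down b.down⟩, le_max_left _ _, le_max_right _ _⟩,
   fun n => t n.down⟩

lemma seqNetU_cutPair {X : Type u} {d : X → X → ℝ} {t : ℕ → X}
    (ht : RightKCauchySeq d t) : IsCutPair d {seqNetU t} ∅ := by
  have hrc : Net.RightCauchy d (seqNetU t) := by
    intro ε hε
    obtain ⟨k, hk⟩ := ht ε hε
    exact ⟨⟨k⟩, fun α β hα hβ hnot => hk β.down α.down hα (le_of_not_ge hnot)⟩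
  have hrcof : Net.RightCofinalTo d (seqNetU t) (seqNetU t) := by
    intro ε hε
    obtain ⟨k, hk⟩ := ht ε hε
    exact ⟨⟨k⟩, fun a hak => ⟨a, fun b hab => hk b.down a.down hak hab⟩⟩
  refine ⟨?_, ?_, ?_, ?_, ?_⟩
  · intro M hM
    rw [Set.mem_singleton_iff] at hM
    subst hM
    exact hrc
  · intro M hM
    exact absurd hM (Set.notMem_empty M)
  · intro _ _ M hM
    exact absurd hM (Set.notMem_empty M)
  · intro M hM M' hM'
    rw [Set.mem_singleton_iff] at hM hM'
    subst hM; subst hM'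
    exact ⟨hrcof, hrcof⟩
  · intro M hM
    exact absurd hM (Set.notMem_empty M)

lemma exists_cut {X : Type u} {d : X → X → ℝ} {S : Net.{u, u} X}
    (h0 : IsCutPair d {S} ∅) : ∃ ξ : DeltaCut d, S ∈ ξ.A := by
  have hzorn : ∀ ch ⊆ {p : Set (Net.{u, u} X) × Set (Net.{u, u} X) |
      IsCutPair d p.1 p.2 ∧ S ∈ p.1}, IsChain (· ≤ ·) ch →
      ∃ ub ∈ {p : Set (Net.{u, u} X) × Set (Net.{u, u} X) |
      IsCutPair d p.1 p.2 ∧ S ∈ p.1}, ∀ z ∈ ch, z ≤ ub := by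
    intro ch hch hchain
    rcases ch.eq_empty_or_nonempty with rfl | ⟨p₀, hp₀⟩
    · exact ⟨({S}, ∅), ⟨h0, Set.mem_singleton _⟩, fun z hz => absurd hz (Set.notMem_empty z)⟩
    · have htot : ∀ p ∈ ch, ∀ q ∈ ch, ∃ r ∈ ch, p ≤ r ∧ q ≤ r := by
        intro p hp q hq
        by_cases hpq : p = q
        · exact ⟨q, hq, hpq ▸ le_refl q, le_refl q⟩
        · rcases hchain hp hq hpq with h | h
          · exact ⟨q, hq, h, le_refl q⟩
          · exact ⟨p, hp, le_refl p, h⟩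
      have hmem1 : ∀ {N : Net.{u, u} X}, N ∈ ⋃ p ∈ ch, (p :
          Set (Net.{u, u} X) × Set (Net.{u, u} X)).1 → ∃ p ∈ ch, N ∈ p.1 := by
        intro N hN
        simpa using hN
      have hmem2 : ∀ {N : Net.{u, u} X}, N ∈ ⋃ p ∈ ch, (p :
          Set (Net.{u, u} X) × Set (Net.{u, u} X)).2 → ∃ p ∈ ch, N ∈ p.2 := by
        intro N hN
        simpa using hN
      refine ⟨(⋃ p ∈ ch, p.1, ⋃ p ∈ ch, p.2), ⟨⟨?_, ?_, ?_, ?_, ?_⟩, ?_⟩, ?_⟩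
      · intro N hN
        obtain ⟨p, hp, hNp⟩ := hmem1 hN
        exact (hch hp).1.1 N hNp
      · intro M hM
        obtain ⟨p, hp, hMp⟩ := hmem2 hM
        exact (hch hp).1.2.1 M hMp
      · intro N hN M hM
        obtain ⟨p, hp, hNp⟩ := hmem1 hN
        obtain ⟨q, hq, hMq⟩ := hmem2 hM
        obtain ⟨r, hr, hpr, hqr⟩ := htot p hp q hq
        exact (hch hr).1.2.2.1 N (hpr.1 hNp) M (hqr.2 hMq)
      · intro N hN N' hN'
        obtain ⟨p, hp, hNp⟩ := hmem1 hN
        obtain ⟨q, hq, hNq⟩ := hmem1 hN'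
        obtain ⟨r, hr, hpr, hqr⟩ := htot p hp q hq
        exact (hch hr).1.2.2.2.1 N (hpr.1 hNp) N' (hqr.1 hNq)
      · intro M hM M' hM'
        obtain ⟨p, hp, hMp⟩ := hmem2 hM
        obtain ⟨q, hq, hMq⟩ := hmem2 hM'
        obtain ⟨r, hr, hpr, hqr⟩ := htot p hp q hq
        exact (hch hr).1.2.2.2.2 M (hpr.2 hMp) M' (hqr.2 hMq)
      · exact Set.mem_biUnion hp₀ (hch hp₀).2
      · intro z hz
        exact Prod.le_def.mpr ⟨Set.subset_biUnion_of_mem hz, Set.subset_biUnion_of_mem hz⟩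
  obtain ⟨m, hm⟩ := zorn_le₀ _ hzorn
  refine ⟨⟨m.1, m.2, hm.1.1, ?_⟩, hm.1.2⟩
  intro A' B' hcp hA hB
  have hle : m ≤ (A', B') := Prod.le_def.mpr ⟨hA, hB⟩
  have h2 := hm.2 ⟨hcp, hA hm.1.2⟩ hle
  rw [Prod.le_def] at h2
  exact ⟨le_antisymm h2.1 hA, le_antisymm h2.2 hB⟩

/-- A quasi-metric space is `δ`-complete iff every right
`K`-Cauchy sequence converges with respect to `τ_d`. -/
theorem statement15 {X : Type u} (d : X → X → ℝ) (hd : IsQMetric d) :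
    DeltaComplete d ↔
      ∀ t : ℕ → X, RightKCauchySeq d t → ∃ x, SeqConvergesTo d t x := by
  constructor
  · intro hδ t ht
    obtain ⟨ξ, hξ⟩ := exists_cut (seqNetU_cutPair ht)
    obtain ⟨x, hx⟩ := hδ ξ _ hξ
    refine ⟨x, fun ε hε => ?_⟩
    obtain ⟨a₀, ha₀⟩ := hx ε hε
    exact ⟨a₀.down, fun n hn => ha₀ ⟨n⟩ hn⟩
  · intro hseq ξ N hN
    exact key_converges hd hseq N (ξ.isCutPair.1 N hN) (ξ.isCutPair.2.2.2.1 N hN N hN).1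
end

section
/- Let (X,d) be a quasi-pseudometric space and let 𝒰_d be the quasi-uniformity induced on X by d. Then the quasi-uniform space (X, 𝒰_d) is 𝒰_d-complete if and only if the quasi-pseudometric space (X,d) is δ-complete. -/
universe u v w

section Aux

variable {X : Type u} (d : X → X → ℝ)

lemma basic_mem_Ud {ε : ℝ} (hε : 0 < ε) : {p : X × X | d p.1 p.2 < ε} ∈ Ud d :=
  ⟨ε, hε, subset_rfl⟩

lemma uRightCauchy_iff (N : Net.{u, v} X) :
    Net.URightCauchy (Ud d) N ↔ Net.RightCauchy d N := by
  constructor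
  · intro h ε hε
    exact h _ (basic_mem_Ud d hε)
  · rintro h U ⟨ε, hε, hsub⟩
    obtain ⟨a₀, ha⟩ := h ε hε
    exact ⟨a₀, fun α β h1 h2 h3 => hsub (ha α β h1 h2 h3)⟩

lemma uLeftCauchy_iff (N : Net.{u, v} X) :
    Net.ULeftCauchy (Ud d) N ↔ Net.LeftCauchy d N := by
  constructor
  · intro h ε hε
    exact h _ (basic_mem_Ud d hε)
  · rintro h U ⟨ε, hε, hsub⟩
    obtain ⟨a₀, ha⟩ := h ε hε
    exact ⟨a₀, fun α β h1 h2 h3 => hsub (ha α β h1 h2 h3)⟩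

lemma uIsConet_iff (M : Net.{u, v} X) (N : Net.{u, w} X) :
    Net.UIsConet (Ud d) M N ↔ Net.IsConet d M N := by
  constructor
  · intro h ε hε
    exact h _ (basic_mem_Ud d hε)
  · rintro h U ⟨ε, hε, hsub⟩
    obtain ⟨a₀, b₀, ha⟩ := h ε hε
    exact ⟨a₀, b₀, fun a b h1 h2 => hsub (ha a b h1 h2)⟩

lemma uRightCofinalTo_iff (N : Net.{u, v} X) (M : Net.{u, w} X) :
    Net.URightCofinalTo (Ud d) N M ↔ Net.RightCofinalTo d N M := by
  constructor
  · intro h ε hε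
    exact h _ (basic_mem_Ud d hε)
  · rintro h U ⟨ε, hε, hsub⟩
    obtain ⟨a₀, ha⟩ := h ε hε
    refine ⟨a₀, fun a haa => ?_⟩
    obtain ⟨b₀, hb⟩ := ha a haa
    exact ⟨b₀, fun b hbb => hsub (hb b hbb)⟩

lemma uLeftCofinalTo_iff (N : Net.{u, v} X) (M : Net.{u, w} X) :
    Net.ULeftCofinalTo (Ud d) N M ↔ Net.LeftCofinalTo d N M := by
  constructor
  · intro h ε hε
    exact h _ (basic_mem_Ud d hε)
  · rintro h U ⟨ε, hε, hsub⟩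
    obtain ⟨a₀, ha⟩ := h ε hε
    refine ⟨a₀, fun a haa => ?_⟩
    obtain ⟨b₀, hb⟩ := ha a haa
    exact ⟨b₀, fun b hbb => hsub (hb b hbb)⟩

lemma uConvergesTo_iff (N : Net.{u, v} X) (x : X) :
    Net.UConvergesTo (Ud d) N x ↔ Net.ConvergesTo d N x := by
  constructor
  · intro h ε hε
    exact h _ (basic_mem_Ud d hε)
  · rintro h U ⟨ε, hε, hsub⟩
    obtain ⟨a₀, ha⟩ := h ε hε
    exact ⟨a₀, fun a haa => hsub (ha a haa)⟩

lemma uCutPair_iff (A B : Set (Net.{u, u} X)) :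
    UIsCutPair (Ud d) A B ↔ IsCutPair d A B := by
  unfold UIsCutPair IsCutPair Net.URightCofinal Net.ULeftCofinal
    Net.RightCofinal Net.LeftCofinal
  simp only [uRightCauchy_iff, uLeftCauchy_iff, uIsConet_iff,
    uRightCofinalTo_iff, uLeftCofinalTo_iff]

end Aux

/-- `(X, 𝒰_d)` is `𝒰_d`-complete iff `(X, d)` is `δ`-complete. -/
theorem statement17 {X : Type u} (d : X → X → ℝ) (hd : IsQPMetric d) :
    UComplete (Ud d) ↔ DeltaComplete d := by
  constructor
  · intro hU ξ N hN
    let ξ' : UCut (Ud d) :=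
      ⟨ξ.A, ξ.B, (uCutPair_iff d _ _).mpr ξ.isCutPair,
        fun A' B' h hA hB => ξ.maximal A' B' ((uCutPair_iff d _ _).mp h) hA hB⟩
    obtain ⟨x, hx⟩ := hU ξ' N hN
    exact ⟨x, (uConvergesTo_iff d N x).mp hx⟩
  · intro hD ξ N hN
    let ξ' : DeltaCut d :=
      ⟨ξ.A, ξ.B, (uCutPair_iff d _ _).mp ξ.isCutPair,
        fun A' B' h hA hB => ξ.maximal A' B' ((uCutPair_iff d _ _).mpr h) hA hB⟩
    obtain ⟨x, hx⟩ := hD ξ' N hN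
    exact ⟨x, (uConvergesTo_iff d N x).mpr hx⟩
end

section
/- If {(X_i, 𝒰_i) : i ∈ I} is a family of quasi-uniform spaces such that each (X_i, 𝒰_i) is 𝒰_i-complete, then the product quasi-uniform space (∏_{i∈I} X_i, ∏_{i∈I} 𝒰_i) is complete with respect to the product quasi-uniformity, i.e. every Cauchy net (in the cut sense) for the product quasi-uniformity converges in the product topology. -/
universe u v w

section Aux

/-- An entourage of the product quasi-uniformity coming from one coordinate. -/
lemma coordEnt_mem {I : Type u} {X : I → Type u} (𝒰 : ∀ i, Set (Set (X i × X i)))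
    (i : I) {U : Set (X i × X i)} (hU : U ∈ 𝒰 i) :
    {p : (∀ j, X j) × (∀ j, X j) | (p.1 i, p.2 i) ∈ U} ∈ ProdU 𝒰 := by
  classical
  refine ⟨{i}, fun j => if h : i = j then h ▸ U else Set.univ, ?_, ?_⟩
  · intro j hj
    simp only [Finset.mem_singleton] at hj
    subst hj
    simpa using hU
  · intro p hp
    have := hp i (by simp)
    simpa using this

/-- Projection of a cut pair for the product quasi-uniformity to a coordinate. -/
lemma projCutPair {I : Type u} {X : I → Type u} (𝒰 : ∀ i, Set (Set (X i × X i)))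
    (i : I) {A B : Set (Net.{u, u} (∀ j, X j))}
    (h : UIsCutPair (ProdU 𝒰) A B) :
    UIsCutPair (𝒰 i) ((fun N => N.map (fun f => f i)) '' A)
      ((fun N => N.map (fun f => f i)) '' B) := by
  obtain ⟨h1, h2, h3, h4, h5⟩ := h
  refine ⟨?_, ?_, ?_, ?_, ?_⟩
  · rintro _ ⟨N, hN, rfl⟩ U hU
    obtain ⟨a₀, ha⟩ := h1 N hN _ (coordEnt_mem 𝒰 i hU)
    exact ⟨a₀, fun α β hα hβ hn => ha α β hα hβ hn⟩
  · rintro _ ⟨M, hM, rfl⟩ U hU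
    obtain ⟨a₀, ha⟩ := h2 M hM _ (coordEnt_mem 𝒰 i hU)
    exact ⟨a₀, fun α β hα hβ hn => ha α β hα hβ hn⟩
  · rintro _ ⟨N, hN, rfl⟩ _ ⟨M, hM, rfl⟩ U hU
    obtain ⟨a₀, b₀, ha⟩ := h3 N hN M hM _ (coordEnt_mem 𝒰 i hU)
    exact ⟨a₀, b₀, fun a b h' h'' => ha a b h' h''⟩
  · rintro _ ⟨N, hN, rfl⟩ _ ⟨N', hN', rfl⟩
    obtain ⟨hl, hr⟩ := h4 N hN N' hN'
    constructor
    · intro U hU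
      obtain ⟨a₀, ha⟩ := hl _ (coordEnt_mem 𝒰 i hU)
      refine ⟨a₀, fun a haa => ?_⟩
      obtain ⟨b₀, hb⟩ := ha a haa
      exact ⟨b₀, fun b hbb => hb b hbb⟩
    · intro U hU
      obtain ⟨a₀, ha⟩ := hr _ (coordEnt_mem 𝒰 i hU)
      refine ⟨a₀, fun a haa => ?_⟩
      obtain ⟨b₀, hb⟩ := ha a haa
      exact ⟨b₀, fun b hbb => hb b hbb⟩
  · rintro _ ⟨M, hM, rfl⟩ _ ⟨M', hM', rfl⟩
    obtain ⟨hl, hr⟩ := h5 M hM M' hM'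
    constructor
    · intro U hU
      obtain ⟨a₀, ha⟩ := hl _ (coordEnt_mem 𝒰 i hU)
      refine ⟨a₀, fun a haa => ?_⟩
      obtain ⟨b₀, hb⟩ := ha a haa
      exact ⟨b₀, fun b hbb => hb b hbb⟩
    · intro U hU
      obtain ⟨a₀, ha⟩ := hr _ (coordEnt_mem 𝒰 i hU)
      refine ⟨a₀, fun a haa => ?_⟩
      obtain ⟨b₀, hb⟩ := ha a haa
      exact ⟨b₀, fun b hbb => hb b hbb⟩

/-- Decoding a set of tagged nets: the `false` part. -/
private def dec0 {Y : Type u} (S : Set (Net.{u, u} Y × Bool)) : Set (Net.{u, u} Y) :=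
  {N | (N, false) ∈ S}

/-- Decoding a set of tagged nets: the `true` part. -/
private def dec1 {Y : Type u} (S : Set (Net.{u, u} Y × Bool)) : Set (Net.{u, u} Y) :=
  {N | (N, true) ∈ S}

/-- Every cut pair extends to a (maximal) `𝒰`-cut, by Zorn's lemma. -/
lemma exists_cut_extension {Y : Type u} (𝒰 : Set (Set (Y × Y)))
    {A B : Set (Net.{u, u} Y)} (h : UIsCutPair 𝒰 A B) :
    ∃ ξ : UCut 𝒰, A ⊆ ξ.A ∧ B ⊆ ξ.B := by
  classical
  set 𝒮 : Set (Set (Net.{u, u} Y × Bool)) := {S | UIsCutPair 𝒰 (dec0 S) (dec1 S)} with h𝒮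
  -- the encoded starting pair
  set S₀ : Set (Net.{u, u} Y × Bool) :=
    {p | (p.2 = false ∧ p.1 ∈ A) ∨ (p.2 = true ∧ p.1 ∈ B)} with hS₀
  have hd0 : dec0 S₀ = A := by
    ext N; simp [dec0, hS₀]
  have hd1 : dec1 S₀ = B := by
    ext N; simp [dec1, hS₀]
  have hS₀mem : S₀ ∈ 𝒮 := by
    rw [h𝒮, Set.mem_setOf_eq, hd0, hd1]; exact h
  -- chain condition
  have hchain : ∀ c ⊆ 𝒮, IsChain (· ⊆ ·) c → c.Nonempty →
      ∃ ub ∈ 𝒮, ∀ s ∈ c, s ⊆ ub := by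
    intro c hc hchain ⟨S₁, hS₁⟩
    refine ⟨⋃₀ c, ?_, fun s hs => Set.subset_sUnion_of_mem hs⟩
    have hmem0 : ∀ N ∈ dec0 (⋃₀ c), ∃ S ∈ c, N ∈ dec0 S := by
      rintro N ⟨S, hS, hNS⟩; exact ⟨S, hS, hNS⟩
    have hmem1 : ∀ N ∈ dec1 (⋃₀ c), ∃ S ∈ c, N ∈ dec1 S := by
      rintro N ⟨S, hS, hNS⟩; exact ⟨S, hS, hNS⟩
    -- for binary conditions, get a common member of the chain
    have hcommon : ∀ S ∈ c, ∀ S' ∈ c, ∃ T ∈ c, S ⊆ T ∧ S' ⊆ T := by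
      intro S hS S' hS'
      rcases hchain.total hS hS' with h' | h'
      · exact ⟨S', hS', h', subset_rfl⟩
      · exact ⟨S, hS, subset_rfl, h'⟩
    refine ⟨?_, ?_, ?_, ?_, ?_⟩
    · intro N hN
      obtain ⟨S, hS, hNS⟩ := hmem0 N hN
      exact (hc hS).1 N hNS
    · intro M hM
      obtain ⟨S, hS, hMS⟩ := hmem1 M hM
      exact (hc hS).2.1 M hMS
    · intro N hN M hM
      obtain ⟨S, hS, hNS⟩ := hmem0 N hN
      obtain ⟨S', hS', hMS⟩ := hmem1 M hM
      obtain ⟨T, hT, hST, hS'T⟩ := hcommon S hS S' hS'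
      exact (hc hT).2.2.1 N (hST hNS) M (hS'T hMS)
    · intro N hN N' hN'
      obtain ⟨S, hS, hNS⟩ := hmem0 N hN
      obtain ⟨S', hS', hNS'⟩ := hmem0 N' hN'
      obtain ⟨T, hT, hST, hS'T⟩ := hcommon S hS S' hS'
      exact (hc hT).2.2.2.1 N (hST hNS) N' (hS'T hNS')
    · intro M hM M' hM'
      obtain ⟨S, hS, hMS⟩ := hmem1 M hM
      obtain ⟨S', hS', hMS'⟩ := hmem1 M' hM'
      obtain ⟨T, hT, hST, hS'T⟩ := hcommon S hS S' hS'
      exact (hc hT).2.2.2.2 M (hST hMS) M' (hS'T hMS')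
  obtain ⟨m, hS₀m, hmax⟩ := zorn_subset_nonempty 𝒮 hchain S₀ hS₀mem
  refine ⟨⟨dec0 m, dec1 m, hmax.prop, ?_⟩, ?_, ?_⟩
  · intro A' B' h' hA' hB'
    set S' : Set (Net.{u, u} Y × Bool) :=
      {p | (p.2 = false ∧ p.1 ∈ A') ∨ (p.2 = true ∧ p.1 ∈ B')} with hS'
    have hd0' : dec0 S' = A' := by ext N; simp [dec0, hS']
    have hd1' : dec1 S' = B' := by ext N; simp [dec1, hS']
    have hS'mem : S' ∈ 𝒮 := by
      rw [h𝒮, Set.mem_setOf_eq, hd0', hd1']; exact h'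
    have hmS' : m ⊆ S' := by
      rintro ⟨N, b⟩ hp
      cases b
      · exact Or.inl ⟨rfl, hA' hp⟩
      · exact Or.inr ⟨rfl, hB' hp⟩
    have heq : S' ⊆ m := hmax.le_of_ge hS'mem hmS'
    constructor
    · apply le_antisymm
      · rw [← hd0']; intro N hN; exact heq hN
      · exact hA'
    · apply le_antisymm
      · rw [← hd1']; intro N hN; exact heq hN
      · exact hB'
  · rw [← hd0]; intro N hN; exact hS₀m hN
  · rw [← hd1]; intro N hN; exact hS₀m hN

/-- Upper bound in a directed index set for a finite family of indices. -/
lemma net_finset_upper {Y : Type u} (N : Net.{u, v} Y) {γ : Type w}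
    (s : Finset γ) (f : γ → N.ι) : ∃ a₀ : N.ι, ∀ j ∈ s, N.le (f j) a₀ := by
  classical
  induction s using Finset.induction_on with
  | empty =>
    obtain ⟨a⟩ := N.nonempty
    exact ⟨a, by simp⟩
  | @insert j t hj ih =>
    obtain ⟨a₀, ha₀⟩ := ih
    obtain ⟨a₁, h1, h2⟩ := N.directed (f j) a₀
    refine ⟨a₁, fun k hk => ?_⟩
    rcases Finset.mem_insert.mp hk with rfl | hk
    · exact h1
    · exact N.le_trans _ _ _ (ha₀ k hk) h2

end Aux

/-- A product of `𝒰_i`-complete quasi-uniform spaces is complete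
for the product quasi-uniformity. -/
theorem statement18 {I : Type u} {X : I → Type u}
    (𝒰 : ∀ i, Set (Set (X i × X i)))
    (hqu : ∀ i, IsQuasiUniformity (𝒰 i)) (hc : ∀ i, UComplete (𝒰 i)) :
    UComplete (ProdU 𝒰) := by
  intro ξ N hN
  have key : ∀ i, ∃ x : X i, Net.UConvergesTo (𝒰 i) (N.map (fun f => f i)) x := by
    intro i
    obtain ⟨ζ, hA, hB⟩ := exists_cut_extension (𝒰 i) (projCutPair 𝒰 i ξ.isCutPair)
    exact hc i ζ _ (hA ⟨N, hN, rfl⟩)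
  choose x hx using key
  refine ⟨x, ?_⟩
  rintro W ⟨s, U, hU, hsub⟩
  have hxs : ∀ i ∈ s, ∃ a₀ : N.ι, ∀ a : N.ι, N.le a₀ a →
      (x i, N.toFun a i) ∈ U i := fun i hi => hx i (U i) (hU i hi)
  haveI : Nonempty N.ι := N.nonempty
  choose! a ha using hxs
  obtain ⟨a₀, ha₀⟩ := net_finset_upper N s a
  exact ⟨a₀, fun b hb =>
    hsub (fun i hi => ha i hi b (N.le_trans _ _ _ (ha₀ i hi) hb))⟩
end
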